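/- arXiv:math/0303182 — 5 statements merged into one kernel-verified Lean document; each statement's English description precedes it below -/
import Mathlib

section
/- Let Φ be a finite crystallographic root system, γ ∈ Φ, and suppose γ = α₁ + ⋯ + α_k with each αᵢ ∈ Φ. Then for each j with 1 ≤ j ≤ k, either γ − α_j ∈ Φ ∪ {0}, or there exists l ≠ j with 1 ≤ l ≤ k such that α_j + α_l ∈ Φ ∪ {0}. -/
open RealInnerProductSpace
open scoped Classical

variable {V : Type*} [NormedAddCommGroup V] [InnerProductSpace ℝ V] [FiniteDimensional ℝ V]

/-- A finite crystallographic root system in the real inner product space `V`. -/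
structure IsRootSystem (Φ : Set V) : Prop where
  finite : Φ.Finite
  nonzero : (0 : V) ∉ Φ
  spanning : Submodule.span ℝ Φ = ⊤
  reflect_mem : ∀ α ∈ Φ, ∀ β ∈ Φ, β - (2 * ⟪β, α⟫ / ⟪α, α⟫) • α ∈ Φ
  crystallographic : ∀ α ∈ Φ, ∀ β ∈ Φ, ∃ n : ℤ, 2 * ⟪β, α⟫ / ⟪α, α⟫ = (n : ℝ)

/-- `Pos` is a system of positive roots for `Φ`: the roots on the positive side of a
generic linear functional. -/
def IsPositiveSystem (Φ Pos : Set V) : Prop :=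
  ∃ f : V →ₗ[ℝ] ℝ, (∀ α ∈ Φ, f α ≠ 0) ∧ Pos = {α ∈ Φ | 0 < f α}

/-- Irreducibility of a root system: no splitting into two nonempty orthogonal parts. -/
def IsIrreducibleRootSystem (Φ : Set V) : Prop :=
  Φ.Nonempty ∧ ∀ Φ₁ Φ₂ : Set V, Φ = Φ₁ ∪ Φ₂ →
    (∀ α ∈ Φ₁, ∀ β ∈ Φ₂, ⟪α, β⟫ = 0) → Φ₁ = ∅ ∨ Φ₂ = ∅

/-- A simple root: a positive root that is not the sum of two positive roots. -/
def IsSimpleRoot (Pos : Set V) (α : V) : Prop :=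
  α ∈ Pos ∧ ∀ β ∈ Pos, ∀ γ ∈ Pos, α ≠ β + γ

/-- An upper order ideal of the positive roots. -/
def IsUpperIdeal (Pos I : Set V) : Prop :=
  I ⊆ Pos ∧ ∀ α ∈ I, ∀ β ∈ Pos, α + β ∈ Pos → α + β ∈ I

/-- `γ` is a sum of `k` elements of `S`. -/
def IsSumOf (S : Set V) (k : ℕ) (γ : V) : Prop :=
  ∃ f : Fin k → V, (∀ i, f i ∈ S) ∧ ∑ i, f i = γ

/-- The standard partial order on roots: `α ≼ γ` iff `γ - α` is a (possibly empty)
sum of positive roots. -/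
def RootLE (Pos : Set V) (α γ : V) : Prop := ∃ k, IsSumOf Pos k (γ - α)

/-- The set of minimal roots of an ideal `I`. -/
def minimalRoots (Pos I : Set V) : Set V :=
  {α | α ∈ I ∧ ∀ β ∈ I, RootLE Pos β α → β = α}

/-- `γ_{I,+}`: the maximal number of summands in a decomposition of `γ` as a sum of
elements of `I` (with junk value `0` if no decomposition exists). -/
noncomputable def aPlus (I : Set V) (γ : V) : ℕ := sSup {k | IsSumOf I k γ}

/-- `γ_{I,-}`: the minimal `k` such that `γ` is a sum of `k + 1` elements of
`Pos \ I`. -/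
noncomputable def aMinus (Pos I : Set V) (γ : V) : ℕ := sInf {k | IsSumOf (Pos \ I) (k + 1) γ}

/-- The height of a positive root: the number of summands when written as a sum of
simple roots. -/
noncomputable def rootHeight (Pos : Set V) (γ : V) : ℕ :=
  sSup {k | IsSumOf {α | IsSimpleRoot Pos α} k γ}

lemma IsRootSystem.neg_mem {Φ : Set V} (hΦ : IsRootSystem Φ) {α : V} (hα : α ∈ Φ) :
    -α ∈ Φ := by
  have hα0 : α ≠ 0 := fun h0 => hΦ.nonzero (h0 ▸ hα)
  have hne : ⟪α, α⟫ ≠ 0 := inner_self_ne_zero.mpr hα0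
  have h := hΦ.reflect_mem α hα α hα
  rw [mul_div_assoc, div_self hne, mul_one] at h
  have : α - (2 : ℝ) • α = -α := by
    rw [two_smul]; abel
  rwa [this] at h

lemma IsRootSystem.sub_mem_or_zero {Φ : Set V} (hΦ : IsRootSystem Φ) {α β : V}
    (hα : α ∈ Φ) (hβ : β ∈ Φ) (hpos : 0 < ⟪α, β⟫) : α - β ∈ Φ ∪ {0} := by
  have hα0 : α ≠ 0 := fun h0 => hΦ.nonzero (h0 ▸ hα)
  have hβ0 : β ≠ 0 := fun h0 => hΦ.nonzero (h0 ▸ hβ)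
  have ha : (0:ℝ) < ⟪α, α⟫ := by
    rw [real_inner_self_eq_norm_sq]; exact pow_pos (norm_pos_iff.mpr hα0) 2
  have hb : (0:ℝ) < ⟪β, β⟫ := by
    rw [real_inner_self_eq_norm_sq]; exact pow_pos (norm_pos_iff.mpr hβ0) 2
  obtain ⟨n, hn⟩ := hΦ.crystallographic β hβ α hα
  obtain ⟨m, hm⟩ := hΦ.crystallographic α hα β hβ
  -- hn : 2 * ⟪α, β⟫ / ⟪β, β⟫ = n, hm : 2 * ⟪β, α⟫ / ⟪α, α⟫ = m
  have hsym : ⟪β, α⟫ = ⟪α, β⟫ := real_inner_comm α β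
  have hn' : 2 * ⟪α, β⟫ = (n : ℝ) * ⟪β, β⟫ := by
    field_simp at hn; linarith
  have hm' : 2 * ⟪α, β⟫ = (m : ℝ) * ⟪α, α⟫ := by
    rw [hsym] at hm; field_simp at hm; linarith
  have hnpos : (0:ℝ) < (n : ℝ) := by nlinarith [hn', hb, hpos]
  have hmpos : (0:ℝ) < (m : ℝ) := by nlinarith [hm', ha, hpos]
  have hn1 : 1 ≤ n := by exact_mod_cast hnpos
  have hm1 : 1 ≤ m := by exact_mod_cast hmpos
  -- Cauchy-Schwarz : ⟪α,β⟫² ≤ ⟪α,α⟫⟪β,β⟫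
  have hcs : ⟪α, β⟫ ^ 2 ≤ ⟪α, α⟫ * ⟪β, β⟫ := by
    have := abs_real_inner_le_norm α β
    have h2 : ⟪α, β⟫ ^ 2 ≤ (‖α‖ * ‖β‖) ^ 2 := by
      rw [← sq_abs]
      exact pow_le_pow_left₀ (abs_nonneg _) this 2
    calc ⟪α, β⟫ ^ 2 ≤ (‖α‖ * ‖β‖) ^ 2 := h2
      _ = ⟪α, α⟫ * ⟪β, β⟫ := by
          rw [mul_pow, ← real_inner_self_eq_norm_sq, ← real_inner_self_eq_norm_sq]
  have hnm4 : (n : ℝ) * (m : ℝ) ≤ 4 := by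
    have key : ((n : ℝ) * m) * (⟪α, α⟫ * ⟪β, β⟫) = 4 * ⟪α, β⟫ ^ 2 := by
      have := hn'; have := hm'; nlinarith [hn', hm']
    nlinarith [mul_pos ha hb]
  have hnm4' : n * m ≤ 4 := by exact_mod_cast hnm4
  rcases eq_or_lt_of_le hn1 with h1 | h1
  · -- n = 1 : reflect α in β
    left
    have h := hΦ.reflect_mem β hβ α hα
    rw [hn, ← h1] at h
    simpa using h
  rcases eq_or_lt_of_le hm1 with h2 | h2
  · -- m = 1 : reflect β in α, then negate
    left
    have h := hΦ.reflect_mem α hα β hβ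
    rw [hm, ← h2] at h
    simp only [Int.cast_one, one_smul] at h
    have := hΦ.neg_mem h
    simpa [neg_sub] using this
  · -- n, m ≥ 2 forces n = m = 2, equality in Cauchy-Schwarz, α = β
    have hn2 : 2 ≤ n := h1
    have hm2 : 2 ≤ m := h2
    have hne : n = 2 ∧ m = 2 := by
      constructor <;> nlinarith
    right
    have hpa : ⟪α, β⟫ = ⟪α, α⟫ := by
      have := hm'; rw [hne.2] at this; push_cast at this; linarith
    have hpb : ⟪α, β⟫ = ⟪β, β⟫ := by
      have := hn'; rw [hne.1] at this; push_cast at this; linarith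
    have hzero : ⟪α - β, α - β⟫ = (0:ℝ) := by
      rw [inner_sub_sub_self]; rw [hsym] at *; linarith
    have : α - β = 0 := inner_self_eq_zero.mp hzero
    simpa using this

/-- If `γ ∈ Φ` and `γ = α₁ + ⋯ + α_k` with each `αᵢ ∈ Φ`, then for each `j` either
`γ - α_j ∈ Φ ∪ {0}` or `α_j + α_l ∈ Φ ∪ {0}` for some `l ≠ j`. -/
theorem root_sum_subtract_or_combine (Φ : Set V) (hΦ : IsRootSystem Φ)
    (γ : V) (hγ : γ ∈ Φ) (k : ℕ) (αs : Fin k → V) (hαs : ∀ i, αs i ∈ Φ)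
    (hsum : ∑ i, αs i = γ) (j : Fin k) :
    γ - αs j ∈ Φ ∪ {0} ∨ ∃ l : Fin k, l ≠ j ∧ αs j + αs l ∈ Φ ∪ {0} := by
  by_cases h : ∃ l : Fin k, l ≠ j ∧ ⟪αs j, αs l⟫ < 0
  · obtain ⟨l, hlj, hneg⟩ := h
    right
    refine ⟨l, hlj, ?_⟩
    have hnl : -αs l ∈ Φ := hΦ.neg_mem (hαs l)
    have hpos : 0 < ⟪αs j, -αs l⟫ := by
      rw [inner_neg_right]; linarith
    have := hΦ.sub_mem_or_zero (hαs j) hnl hpos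
    simpa [sub_neg_eq_add] using this
  · left
    push_neg at h
    have hjj : (0:ℝ) < ⟪αs j, αs j⟫ := by
      have h0 : αs j ≠ 0 := fun h0 => hΦ.nonzero (h0 ▸ hαs j)
      rw [real_inner_self_eq_norm_sq]; exact pow_pos (norm_pos_iff.mpr h0) 2
    have hsum' : ⟪γ, αs j⟫ = ∑ l, ⟪αs l, αs j⟫ := by
      rw [← hsum, sum_inner]
    have hpos : 0 < ⟪γ, αs j⟫ := by
      rw [hsum', ← Finset.add_sum_erase _ _ (Finset.mem_univ j)]
      have hrest : 0 ≤ ∑ l ∈ Finset.univ.erase j, ⟪αs l, αs j⟫ :=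
        Finset.sum_nonneg fun l hl => by
          rw [real_inner_comm]
          exact h l (Finset.ne_of_mem_erase hl)
      linarith
    exact hΦ.sub_mem_or_zero hγ (hαs j) hpos
end

section
/- Let Φ be a finite crystallographic root system with a choice of positive roots Φ⁺. Suppose α₁ ∈ Φ ∪ {0}, α₂, …, α_k ∈ Φ⁺, and γ := α₁ + ⋯ + α_k ∈ Φ ∪ {0}. Then there is a permutation σ of {2, …, k} such that every partial sum α₁ + α_{σ(2)} + ⋯ + α_{σ(j)} lies in Φ ∪ {0} for all 1 ≤ j ≤ k. -/
open RealInnerProductSpace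
open scoped Classical

variable {V : Type*} [NormedAddCommGroup V] [InnerProductSpace ℝ V] [FiniteDimensional ℝ V]

/-!
Induct on the number of positive summands. Write `a` for the first term, `δ` for the sum of the
others and `γ = a + δ`. As a nonzero sum of positive roots, `δ` satisfies `⟪x, δ⟫ > 0` for some
summand `x`. If `⟪a, x⟫ < 0`, then `a + x ∈ Φ ∪ {0}` and `x` can be placed first; otherwise
`⟪γ, x⟫ > 0`, so `γ - x ∈ Φ ∪ {0}` and `x` can be placed last.
-/

theorem List.Perm.exists_ofFn_eq {n : ℕ} {l : List (Fin n)} (h : l.Perm (List.finRange n)) :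
    ∃ σ : Equiv.Perm (Fin n), List.ofFn σ = l := by
  have hlen : l.length = n := by simpa using h.length_eq
  refine ⟨(finCongr hlen.symm).trans (List.Nodup.getEquivOfForallMemList l
    (h.nodup_iff.mpr (List.nodup_finRange n)) fun i => h.mem_iff.mpr (List.mem_finRange i)), ?_⟩
  apply List.ext_getElem (by simp [hlen])
  intro i _ _
  simp [List.Nodup.getEquivOfForallMemList]

section RootSystem

variable {E : Type*} [NormedAddCommGroup E] [InnerProductSpace ℝ E] {Φ Pos : Set E}

theorem List.inner_sum_nonpos {L : List E} {c : E} (h : ∀ x ∈ L, ⟪x, c⟫ ≤ 0) :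
    ⟪L.sum, c⟫ ≤ 0 := by
  induction L with
  | nil => simp
  | cons x L ih =>
    rw [List.forall_mem_cons] at h
    rw [List.sum_cons, inner_add_left]
    linarith [h.1, ih h.2]

theorem List.exists_mem_inner_sum_pos {L : List E} (h : L.sum ≠ 0) :
    ∃ x ∈ L, 0 < ⟪x, L.sum⟫ := by
  by_contra! hle
  exact h (real_inner_self_nonpos.mp (List.inner_sum_nonpos hle))

namespace IsRootSystem

theorem ne_zero (hΦ : IsRootSystem Φ) {α : E} (hα : α ∈ Φ) : α ≠ 0 :=
  fun h => hΦ.nonzero (h ▸ hα)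

theorem neg_mem_s2 (hΦ : IsRootSystem Φ) {α : E} (hα : α ∈ Φ) : -α ∈ Φ := by
  have h2 : 2 * ⟪α, α⟫ / ⟪α, α⟫ = 2 := by
    rw [mul_div_assoc, div_self (inner_self_ne_zero.mpr (hΦ.ne_zero hα)), mul_one]
  simpa only [h2, two_smul, sub_add_cancel_left] using hΦ.reflect_mem α hα α hα

theorem inner_le_neg_inner_self_of_add_notMem (hΦ : IsRootSystem Φ) {α β : E} (hα : α ∈ Φ)
    (hβ : β ∈ Φ) (hαβ : ⟪α, β⟫ < 0) (hnot : α + β ∉ Φ) : ⟪β, α⟫ ≤ -⟪α, α⟫ := by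
  have hαα : 0 < ⟪α, α⟫ := real_inner_self_pos.mpr (hΦ.ne_zero hα)
  obtain ⟨n, hn⟩ := hΦ.crystallographic α hα β hβ
  have hn_neg : n < 0 := by
    have : (n : ℝ) < 0 := hn ▸ div_neg_of_neg_of_pos (by rw [real_inner_comm]; linarith) hαα
    exact_mod_cast this
  -- a Cartan integer `-1` would make the reflection `s_α β` equal to `α + β`
  have hn_ne : n ≠ -1 := by
    rintro rfl
    have hrefl := hΦ.reflect_mem α hα β hβ
    rw [hn, Int.cast_neg, Int.cast_one, neg_one_smul, sub_neg_eq_add, add_comm] at hrefl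
    exact hnot hrefl
  have hle : 2 * ⟪β, α⟫ / ⟪α, α⟫ ≤ -2 := by
    rw [hn]
    exact_mod_cast (by omega : n ≤ -2)
  rw [div_le_iff₀ hαα] at hle
  linarith

theorem add_mem_of_inner_neg (hΦ : IsRootSystem Φ) {α β : E} (hα : α ∈ Φ) (hβ : β ∈ Φ)
    (h : ⟪α, β⟫ < 0) : α + β ∈ Φ ∪ {0} := by
  by_contra hnot
  have hnotMem : α + β ∉ Φ := fun h' => hnot (Or.inl h')
  have h₁ := hΦ.inner_le_neg_inner_self_of_add_notMem hα hβ h hnotMem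
  have h₂ := hΦ.inner_le_neg_inner_self_of_add_notMem hβ hα (by rwa [real_inner_comm])
    (by rwa [add_comm])
  -- both Cartan integers are at most `-2`, which forces `‖α + β‖² ≤ 0`
  have hzero : α + β = 0 := by
    rw [← real_inner_self_nonpos, inner_add_add_self]
    linarith
  exact hnot (Or.inr hzero)

theorem sub_mem_of_inner_pos (hΦ : IsRootSystem Φ) {α β : E} (hα : α ∈ Φ) (hβ : β ∈ Φ)
    (h : 0 < ⟪α, β⟫) : α - β ∈ Φ ∪ {0} := by
  rw [sub_eq_add_neg]
  exact hΦ.add_mem_of_inner_neg hα (hΦ.neg_mem_s2 hβ) (by rw [inner_neg_right]; linarith)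

theorem add_mem_or_sub_mem (hΦ : IsRootSystem Φ) {a x γ : E} (ha : a ∈ Φ ∪ {0}) (hx : x ∈ Φ)
    (hγ : γ ∈ Φ ∪ {0}) (h : 0 < ⟪x, γ - a⟫) : a + x ∈ Φ ∪ {0} ∨ γ - x ∈ Φ ∪ {0} := by
  rcases lt_or_ge ⟪a, x⟫ 0 with hax | hax
  · left
    rcases ha with ha | rfl
    · exact hΦ.add_mem_of_inner_neg ha hx hax
    · simp at hax
  · right
    have hγx : 0 < ⟪γ, x⟫ := by
      rw [inner_sub_right] at h
      rw [real_inner_comm] at hax ⊢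
      linarith
    rcases hγ with hγ | rfl
    · exact hΦ.sub_mem_of_inner_pos hγ hx hγx
    · simp at hγx

end IsRootSystem

theorem IsPositiveSystem.subset (hPos : IsPositiveSystem Φ Pos) : Pos ⊆ Φ := by
  obtain ⟨φ, -, rfl⟩ := hPos
  exact fun _ h => h.1

theorem IsPositiveSystem.list_sum_ne_zero (hPos : IsPositiveSystem Φ Pos) {L : List E}
    (hL : ∀ x ∈ L, x ∈ Pos) (hne : L ≠ []) : L.sum ≠ 0 := by
  obtain ⟨φ, -, rfl⟩ := hPos
  have hφ : 0 < φ L.sum := by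
    rw [map_list_sum]
    exact List.sum_pos _ (by simpa using fun x hx => (hL x hx).2) (by simpa using hne)
  intro h
  simp [h] at hφ

theorem IsRootSystem.exists_perm_forall_add_sum_take_mem {ι : Type*} [DecidableEq ι]
    (hΦ : IsRootSystem Φ) (hPos : IsPositiveSystem Φ Pos) (g : ι → E) (l : List ι)
    (hl : ∀ i ∈ l, g i ∈ Pos) {a : E} (ha : a ∈ Φ ∪ {0})
    (hsum : a + (l.map g).sum ∈ Φ ∪ {0}) :
    ∃ l' : List ι, l'.Perm l ∧ ∀ n, a + ((l'.take n).map g).sum ∈ Φ ∪ {0} := by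
  induction hlen : l.length generalizing l a with
  | zero =>
    rw [List.length_eq_zero_iff] at hlen
    subst hlen
    exact ⟨[], List.Perm.nil, fun n => by simpa using ha⟩
  | succ m ih =>
    have hne : l ≠ [] := by rintro rfl; simp at hlen
    obtain ⟨x, hxl, hx⟩ := List.exists_mem_inner_sum_pos (L := l.map g)
      (hPos.list_sum_ne_zero (by simpa using hl) (by simpa using hne))
    obtain ⟨i, hil, rfl⟩ := List.mem_map.mp hxl
    have hperm : l.Perm (i :: l.erase i) := List.perm_cons_erase hil
    have hrest : ∀ j ∈ l.erase i, g j ∈ Pos := fun j hj => hl j (List.mem_of_mem_erase hj)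
    have hlen' : (l.erase i).length = m := by simp [List.length_erase_of_mem hil, hlen]
    have hsplit : (l.map g).sum = g i + ((l.erase i).map g).sum := by
      simp [(hperm.map g).sum_eq]
    rcases hΦ.add_mem_or_sub_mem ha (hPos.subset (hl i hil)) hsum (by simpa using hx)
      with hfirst | hlast
    · obtain ⟨l', hl', hprefix⟩ := ih (l.erase i) hrest hfirst
        (by rwa [hsplit, ← add_assoc] at hsum) hlen'
      refine ⟨i :: l', (hl'.cons i).trans hperm.symm, ?_⟩
      rintro (_ | n)
      · simpa using ha
      · simpa [add_assoc] using hprefix n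
    · obtain ⟨l', hl', hprefix⟩ := ih (l.erase i) hrest ha
        (by convert hlast using 1; rw [hsplit]; abel) hlen'
      have hperm' : (l' ++ [i]).Perm l :=
        ((List.perm_append_singleton i l').trans (hl'.cons i)).trans hperm.symm
      refine ⟨l' ++ [i], hperm', fun n => ?_⟩
      by_cases hn : n ≤ l'.length
      · rw [List.take_append_of_le_length hn]
        exact hprefix n
      · rw [List.take_of_length_le (by rw [List.length_append, List.length_singleton]; omega),
          (hperm'.map g).sum_eq]
        exact hsum

end RootSystem

/-- If `α₁ ∈ Φ ∪ {0}`, `α₂, …, α_k ∈ Φ⁺` and `γ = α₁ + ⋯ + α_k ∈ Φ ∪ {0}`, then the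
`αᵢ` with `i ≥ 2` can be reordered so that every partial sum (starting with `α₁`)
lies in `Φ ∪ {0}`. -/
theorem root_sum_reorder (Φ Pos : Set V) (hΦ : IsRootSystem Φ)
    (hPos : IsPositiveSystem Φ Pos) (k : ℕ) (f : Fin (k + 1) → V)
    (h0 : f 0 ∈ Φ ∪ {0}) (hp : ∀ i : Fin (k + 1), i ≠ 0 → f i ∈ Pos)
    (hγ : (∑ i, f i) ∈ Φ ∪ {0}) :
    ∃ σ : Equiv.Perm (Fin (k + 1)), σ 0 = 0 ∧
      ∀ j : Fin (k + 1),
        (∑ i ∈ Finset.univ.filter (fun i => i ≤ j), f (σ i)) ∈ Φ ∪ {0} := by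
  obtain ⟨l, hl, hprefix⟩ := hΦ.exists_perm_forall_add_sum_take_mem hPos f
    ((List.finRange k).map Fin.succ) (by simpa using hp) h0
    (by rw [List.map_map]; rwa [Fin.sum_univ_succ, ← List.sum_ofFn, List.ofFn_eq_map] at hγ)
  obtain ⟨σ, hσ⟩ : ∃ σ : Equiv.Perm (Fin (k + 1)), List.ofFn σ = 0 :: l :=
    (List.finRange_succ ▸ hl.cons 0).exists_ofFn_eq
  rw [List.ofFn_succ, List.cons.injEq] at hσ
  refine ⟨σ, hσ.1, fun j => ?_⟩
  have hpartial : ∑ i ∈ Finset.univ.filter (fun i => i ≤ j), f (σ i)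
      = ((List.ofFn (f ∘ σ)).take (j + 1)).sum := by
    rw [List.sum_take_ofFn]
    simp only [Nat.lt_add_one_iff, Fin.le_iff_val_le_val, Function.comp_apply]
  rw [hpartial, List.ofFn_succ]
  simpa [hσ.1, ← hσ.2, List.map_ofFn, Function.comp_def] using hprefix j
end

section
/- Let ℐ be an upper order ideal of the positive roots Φ⁺ (i.e., α ∈ ℐ, β ∈ Φ⁺, α + β ∈ Φ⁺ implies α + β ∈ ℐ). For α, β, α+β ∈ Φ⁺, setting a = α_{ℐ,+}, b = β_{ℐ,+}, c = (α+β)_{ℐ,+}, where γ_{ℐ,+} := max{ k : γ = γ₁ + ⋯ + γ_k with all γᵢ ∈ ℐ } (and 0 if no such decomposition exists), we have a + b ≤ c ≤ a + b + 1. -/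
open RealInnerProductSpace
open scoped Classical

variable {V : Type*} [NormedAddCommGroup V] [InnerProductSpace ℝ V] [FiniteDimensional ℝ V]

namespace AplusAux

variable {V : Type*} [NormedAddCommGroup V] [InnerProductSpace ℝ V] [FiniteDimensional ℝ V]
variable {Φ Pos I : Set V}

/-! ### Basic `IsSumOf` manipulations -/

lemma isSumOf_zero {S : Set V} {γ : V} (h : IsSumOf S 0 γ) : γ = 0 := by
  obtain ⟨g, -, hs⟩ := h
  simpa using hs.symm

lemma isSumOf_single {S : Set V} {x : V} (hx : x ∈ S) : IsSumOf S 1 x :=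
  ⟨fun _ => x, fun _ => hx, by simp⟩

lemma isSumOf_cons {S : Set V} {k : ℕ} {w x : V} (h : IsSumOf S k w) (hx : x ∈ S) :
    IsSumOf S (k + 1) (x + w) := by
  obtain ⟨g, hg, hs⟩ := h
  refine ⟨Fin.cons x g, fun i => ?_, by simp [Fin.sum_cons, hs]⟩
  refine Fin.cases ?_ ?_ i <;> simp [hx, hg]

lemma isSumOf_erase {S : Set V} {n : ℕ} (g : Fin (n + 1) → V) (hg : ∀ j, g j ∈ S)
    (i : Fin (n + 1)) : IsSumOf S n ((∑ j, g j) - g i) := by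
  refine ⟨fun j => g (i.succAbove j), fun j => hg _, ?_⟩
  rw [Fin.sum_univ_succAbove g i]
  abel

lemma isSumOf_update {S : Set V} {n : ℕ} (g : Fin n → V) (hg : ∀ j, g j ∈ S)
    (i : Fin n) {x : V} (hx : x ∈ S) : IsSumOf S n ((∑ j, g j) - g i + x) := by
  refine ⟨Function.update g i x, fun j => ?_, ?_⟩
  · rcases eq_or_ne j i with rfl | h
    · simpa using hx
    · simpa [Function.update_of_ne h] using hg j
  · rw [Finset.sum_update_of_mem (Finset.mem_univ i)]
    have h2 : ∑ j ∈ (Finset.univ \ {i}), g j = (∑ j, g j) - g i := by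
      rw [Finset.sum_sdiff_eq_sub (by simp), Finset.sum_singleton]
    rw [h2]
    abel

lemma isSumOf_concat {S : Set V} {k l : ℕ} {u v : V} (h1 : IsSumOf S k u)
    (h2 : IsSumOf S l v) : IsSumOf S (k + l) (u + v) := by
  induction k generalizing u with
  | zero => simpa [isSumOf_zero h1] using h2
  | succ k ih =>
    obtain ⟨g, hg, hs⟩ := h1
    have hrm : IsSumOf S k (u - g 0) := by
      have := isSumOf_erase g hg 0
      rwa [hs] at this
    have := isSumOf_cons (ih hrm) (hg 0)
    have he : g 0 + (u - g 0 + v) = u + v := by abel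
    have hn : k + l + 1 = k + 1 + l := by omega
    rwa [he, hn] at this

/-! ### Root system facts -/

lemma inner_self_pos' {x : V} (hx : x ≠ 0) : 0 < ⟪x, x⟫ := by
  rw [real_inner_self_eq_norm_sq]
  exact pow_pos (norm_pos_iff.2 hx) 2


lemma neg_mem (hΦ : IsRootSystem Φ) {ρ : V} (h : ρ ∈ Φ) : -ρ ∈ Φ := by
  have h2 := hΦ.reflect_mem ρ h ρ h
  have hρ0 : ρ ≠ 0 := fun e => hΦ.nonzero (e ▸ h)
  have hip : ⟪ρ, ρ⟫ ≠ 0 := ne_of_gt (inner_self_pos' hρ0)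
  have he : 2 * ⟪ρ, ρ⟫ / ⟪ρ, ρ⟫ = (2 : ℝ) := by field_simp
  rw [he] at h2
  have : ρ - (2 : ℝ) • ρ = -ρ := by
    rw [two_smul]; abel
  rwa [this] at h2

lemma sub_mem (hΦ : IsRootSystem Φ) {α β : V} (hα : α ∈ Φ) (hβ : β ∈ Φ)
    (hip : 0 < ⟪α, β⟫) (hne : α ≠ β) : α - β ∈ Φ := by
  have hα0 : α ≠ 0 := fun e => hΦ.nonzero (e ▸ hα)
  have hβ0 : β ≠ 0 := fun e => hΦ.nonzero (e ▸ hβ)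
  have hA : 0 < ⟪α, α⟫ := inner_self_pos' hα0
  have hB : 0 < ⟪β, β⟫ := inner_self_pos' hβ0
  by_cases h1 : 2 * ⟪β, α⟫ / ⟪α, α⟫ = 1
  · have h2 := hΦ.reflect_mem α hα β hβ
    rw [h1, one_smul] at h2
    have := neg_mem hΦ h2
    rwa [neg_sub] at this
  · by_cases h2 : 2 * ⟪α, β⟫ / ⟪β, β⟫ = 1
    · have h3 := hΦ.reflect_mem β hβ α hα
      rwa [h2, one_smul] at h3
    · exfalso
      obtain ⟨n1, hn1⟩ := hΦ.crystallographic α hα β hβ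
      obtain ⟨n2, hn2⟩ := hΦ.crystallographic β hβ α hα
      have hba : ⟪β, α⟫ = ⟪α, β⟫ := real_inner_comm α β
      -- n1 = 2⟪β,α⟫/⟪α,α⟫ ≥ 2, n2 = 2⟪α,β⟫/⟪β,β⟫ ≥ 2
      have hn1pos : (0 : ℝ) < (n1 : ℝ) := by
        rw [← hn1, hba]; positivity
      have hn2pos : (0 : ℝ) < (n2 : ℝ) := by
        rw [← hn2]; positivity
      have hn1one : (n1 : ℝ) ≠ 1 := by rw [← hn1]; exact h1
      have hn2one : (n2 : ℝ) ≠ 1 := by rw [← hn2]; exact h2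
      have hn1two : (2 : ℝ) ≤ (n1 : ℝ) := by
        have : (1 : ℤ) ≤ n1 := by exact_mod_cast hn1pos
        have : n1 ≠ 1 := by exact_mod_cast hn1one
        have h4 : (2 : ℤ) ≤ n1 := by omega
        exact_mod_cast h4
      have hn2two : (2 : ℝ) ≤ (n2 : ℝ) := by
        have : (1 : ℤ) ≤ n2 := by exact_mod_cast hn2pos
        have : n2 ≠ 1 := by exact_mod_cast hn2one
        have h4 : (2 : ℤ) ≤ n2 := by omega
        exact_mod_cast h4
      -- so ⟪α,β⟫ ≥ ⟪α,α⟫ and ⟪α,β⟫ ≥ ⟪β,β⟫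
      have hPA : ⟪α, α⟫ ≤ ⟪α, β⟫ := by
        have h5 := hn1two
        rw [← hn1, hba, le_div_iff₀ hA] at h5
        linarith
      have hPB : ⟪β, β⟫ ≤ ⟪α, β⟫ := by
        have h5 := hn2two
        rw [← hn2, le_div_iff₀ hB] at h5
        linarith
      have hz : ⟪α - β, α - β⟫ ≤ 0 := by
        rw [real_inner_sub_sub_self]
        linarith
      have : α - β = 0 := by
        by_contra hne2
        exact absurd hz (not_le.2 (inner_self_pos' hne2))
      exact hne (by rwa [sub_eq_zero] at this)

end AplusAux
namespace AplusAux

variable {V : Type*} [NormedAddCommGroup V] [InnerProductSpace ℝ V] [FiniteDimensional ℝ V]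
variable {Φ Pos I : Set V}

section PosLemmas

lemma mem_pos_iff {f : V →ₗ[ℝ] ℝ} (hPosEq : Pos = {α ∈ Φ | 0 < f α}) {ρ : V} : ρ ∈ Pos ↔ ρ ∈ Φ ∧ 0 < f ρ := by
  rw [hPosEq]; rfl

lemma mem_pos_of {f : V →ₗ[ℝ] ℝ} (hPosEq : Pos = {α ∈ Φ | 0 < f α}) {ρ : V} (h1 : ρ ∈ Φ) (h2 : 0 < f ρ) : ρ ∈ Pos :=
  (mem_pos_iff hPosEq).2 ⟨h1, h2⟩

lemma pos_ne_zero (hΦ : IsRootSystem Φ) {f : V →ₗ[ℝ] ℝ} (hPosEq : Pos = {α ∈ Φ | 0 < f α}) {ρ : V} (h : ρ ∈ Pos) : ρ ≠ 0 :=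
  fun e => hΦ.nonzero (e ▸ ((mem_pos_iff hPosEq).1 h).1)

/-- If `s, γ` are positive roots with `⟪γ, s⟫ > 0` and `f γ < f s`, then `s - γ ∈ Pos`. -/
lemma pos_sub (hΦ : IsRootSystem Φ) (f : V →ₗ[ℝ] ℝ) (hPosEq : Pos = {α ∈ Φ | 0 < f α}) {s γ : V} (hs : s ∈ Pos) (hγ : γ ∈ Pos) (hip : 0 < ⟪s, γ⟫)
    (hlt : f γ < f s) : s - γ ∈ Pos := by
  obtain ⟨hsΦ, hsf⟩ := (mem_pos_iff hPosEq).1 hs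
  obtain ⟨hγΦ, hγf⟩ := (mem_pos_iff hPosEq).1 hγ
  have hne : s ≠ γ := fun e => by rw [e] at hlt; exact lt_irrefl _ hlt
  have hΦm : s - γ ∈ Φ := sub_mem hΦ hsΦ hγΦ hip hne
  exact mem_pos_of hPosEq hΦm (by rw [map_sub]; linarith)

/-- If `γ, α` are positive roots with `⟪γ, α⟫ < 0`, then `γ + α ∈ Pos`. -/
lemma pos_add (hΦ : IsRootSystem Φ) (f : V →ₗ[ℝ] ℝ) (hPosEq : Pos = {α ∈ Φ | 0 < f α}) {γ α : V} (hγ : γ ∈ Pos) (hα : α ∈ Pos) (hip : ⟪γ, α⟫ < 0) :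
    γ + α ∈ Pos := by
  obtain ⟨hγΦ, hγf⟩ := (mem_pos_iff hPosEq).1 hγ
  obtain ⟨hαΦ, hαf⟩ := (mem_pos_iff hPosEq).1 hα
  have hnegΦ : -α ∈ Φ := neg_mem hΦ hαΦ
  have hip2 : 0 < ⟪γ, -α⟫ := by rw [inner_neg_right]; linarith
  have hne : γ ≠ -α := by
    intro e
    have : f γ = -f α := by rw [e, map_neg]
    linarith
  have : γ - -α ∈ Φ := sub_mem hΦ hγΦ hnegΦ hip2 hne
  rw [sub_neg_eq_add] at this
  exact mem_pos_of hPosEq this (by rw [map_add]; linarith)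

lemma f_sum_pos (f : V →ₗ[ℝ] ℝ) (hPosEq : Pos = {α ∈ Φ | 0 < f α}) {n : ℕ} (hn : 0 < n) (g : Fin n → V) (hg : ∀ j, g j ∈ Pos) :
    0 < f (∑ j, g j) := by
  rw [map_sum]
  refine Finset.sum_pos (fun j _ => ((mem_pos_iff hPosEq).1 (hg j)).2) ?_
  have : Nonempty (Fin n) := Fin.pos_iff_nonempty.1 hn
  exact Finset.univ_nonempty

lemma f_sum_nonneg (f : V →ₗ[ℝ] ℝ) (hPosEq : Pos = {α ∈ Φ | 0 < f α}) {n : ℕ} (g : Fin n → V) (hg : ∀ j, g j ∈ Pos) :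
    0 ≤ f (∑ j, g j) := by
  rw [map_sum]
  exact Finset.sum_nonneg (fun j _ => le_of_lt ((mem_pos_iff hPosEq).1 (hg j)).2)

end PosLemmas

/-- helper: a positive sum of inner products has a positive term -/
lemma exists_pos_term {n : ℕ} {x : Fin n → ℝ} (h : 0 < ∑ j, x j) : ∃ j, 0 < x j := by
  by_contra hc
  push_neg at hc
  exact absurd h (not_lt.2 (Finset.sum_nonpos (fun j _ => hc j)))

end AplusAux
namespace AplusAux

variable {V : Type*} [NormedAddCommGroup V] [InnerProductSpace ℝ V] [FiniteDimensional ℝ V]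
variable {Φ Pos I : Set V}

section Main

variable {f : V →ₗ[ℝ] ℝ}

/-- Key merging lemma: if `α ∈ Pos`, `α + v ∈ Pos` and `v` is a sum of `l ≥ 1`
elements of the ideal `I`, then so is `α + v`. -/
lemma low (hΦ : IsRootSystem Φ) (f : V →ₗ[ℝ] ℝ) (hPosEq : Pos = {α ∈ Φ | 0 < f α})
    (hI : IsUpperIdeal Pos I) : ∀ l, 1 ≤ l → ∀ α v : V, α ∈ Pos → α + v ∈ Pos → IsSumOf I l v →
    IsSumOf I l (α + v) := by
  intro l
  induction l with
  | zero => omega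
  | succ l ih =>
    intro _ α v hα hs hv
    obtain ⟨g, hg, hsum⟩ := hv
    rcases Nat.eq_zero_or_pos l with rfl | hl
    · -- base case: one summand
      have hv1 : v = g 0 := by rw [← hsum]; simp
      have : g 0 + α ∈ I := hI.2 (g 0) (hg 0) α hα (by rwa [add_comm, ← hv1])
      exact isSumOf_single (by rwa [hv1, add_comm])
    · by_cases hA : ∃ i, ⟪g i, α⟫ < 0
      · -- merge α into one of the summands
        obtain ⟨i, hi⟩ := hA
        have hgiP : g i + α ∈ Pos := pos_add hΦ f hPosEq (hI.1 (hg i)) hα hi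
        have hgiI : g i + α ∈ I := hI.2 (g i) (hg i) α hα hgiP
        have := isSumOf_update g hg i hgiI
        have he : (∑ j, g j) - g i + (g i + α) = α + v := by rw [hsum]; abel
        rwa [he] at this
      · -- peel off a suitable summand and recurse
        push_neg at hA
        set s := α + v with hsdef
        have hvα : 0 ≤ ⟪v, α⟫ := by
          rw [← hsum, sum_inner]
          exact Finset.sum_nonneg (fun j _ => hA j)
        have hv0 : v ≠ 0 := by
          intro e
          have := f_sum_pos f hPosEq (by omega) g (fun j => hI.1 (hg j))
          rw [hsum, e] at this
          simp at this
        have hvs : 0 < ⟪v, s⟫ := by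
          rw [hsdef, inner_add_right]
          have : 0 < ⟪v, v⟫ := inner_self_pos' hv0
          have h2 : ⟪v, α⟫ = ⟪α, v⟫ := real_inner_comm α v
          linarith [hvα]
        have : 0 < ∑ j, ⟪g j, s⟫ := by
          rw [← sum_inner, hsum]; exact hvs
        obtain ⟨i, hi⟩ := exists_pos_term this
        have hgiP : g i ∈ Pos := hI.1 (hg i)
        have hflt : f (g i) < f s := by
          have h1 : 0 ≤ f (v - g i) := by
            have := isSumOf_erase g hg i
            rw [hsum] at this
            obtain ⟨g', hg', hsum'⟩ := this
            rw [← hsum']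
            exact f_sum_nonneg f hPosEq g' (fun j => hI.1 (hg' j))
          have hαf : 0 < f α := ((mem_pos_iff hPosEq).1 hα).2
          have : f s = f α + f v := by rw [hsdef, map_add]
          rw [map_sub] at h1
          linarith
        have hsgi : s - g i ∈ Pos :=
          pos_sub hΦ f hPosEq hs hgiP (by rwa [real_inner_comm]) hflt
        have hv' : IsSumOf I l (v - g i) := by
          have := isSumOf_erase g hg i
          rwa [hsum] at this
        have he : α + (v - g i) = s - g i := by rw [hsdef]; abel
        have hrec := ih hl α (v - g i) hα (by rwa [he]) hv'
        rw [he] at hrec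
        have := isSumOf_cons hrec (hg i)
        have he2 : g i + (s - g i) = α + v := by rw [hsdef]; abel
        rwa [he2] at this

section WithBdd

lemma le_aPlus (bdd : ∀ γ : V, BddAbove {k | IsSumOf I k γ}) {k : ℕ} {γ : V} (h : IsSumOf I k γ) : k ≤ aPlus I γ :=
  le_csSup (bdd γ) h

lemma aPlus_spec (bdd : ∀ γ : V, BddAbove {k | IsSumOf I k γ}) {γ : V} (hne : {k | IsSumOf I k γ}.Nonempty) :
    IsSumOf I (aPlus I γ) γ :=
  Nat.sSup_mem hne (bdd γ)

/-- If `α = η + γ` with `γ ∈ I` and `η, α ∈ Pos`, then `aPlus α ≥ aPlus η + 1`. -/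
lemma aPlus_succ (hI : IsUpperIdeal Pos I) (bdd : ∀ γ : V, BddAbove {k | IsSumOf I k γ}) {η γ : V} (hγ : γ ∈ I) (hη : η ∈ Pos) (hsP : η + γ ∈ Pos) :
    aPlus I η + 1 ≤ aPlus I (η + γ) := by
  rcases Set.eq_empty_or_nonempty {k | IsSumOf I k η} with hemp | hne
  · have h0 : aPlus I η = 0 := by
      unfold aPlus
      rw [hemp]
      simp only [csSup_empty, Nat.bot_eq_zero]
    rw [h0]
    have hmem : η + γ ∈ I := by
      have := hI.2 γ hγ η hη (by rwa [add_comm])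
      rwa [add_comm] at this
    exact le_aPlus bdd (isSumOf_single hmem)
  · have h1 := isSumOf_cons (aPlus_spec bdd hne) hγ
    have he : γ + η = η + γ := add_comm _ _
    rw [he] at h1
    exact le_aPlus bdd h1

/-- One branch of the upper-bound induction: the case where the chosen summand pairs
with `α`. -/
lemma up_case (hΦ : IsRootSystem Φ) (f : V →ₗ[ℝ] ℝ) (hf : ∀ α ∈ Φ, f α ≠ 0)
    (hPosEq : Pos = {α ∈ Φ | 0 < f α}) (hI : IsUpperIdeal Pos I)
    (bdd : ∀ γ : V, BddAbove {k | IsSumOf I k γ}) {c : ℕ} (hc : 1 ≤ c) {α β : V} (hα : α ∈ Pos) (hβ : β ∈ Pos)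
    (hs : α + β ∈ Pos) (g : Fin (c + 1) → V) (hg : ∀ j, g j ∈ I)
    (hsum : ∑ j, g j = α + β) (i : Fin (c + 1)) (his : 0 < ⟪g i, α + β⟫)
    (hia : 0 < ⟪g i, α⟫)
    (IH : ∀ α' β' : V, α' ∈ Pos → β' ∈ Pos → α' + β' ∈ Pos →
      IsSumOf I c (α' + β') → c ≤ aPlus I α' + aPlus I β' + 1) :
    c + 1 ≤ aPlus I α + aPlus I β + 1 := by
  have hgiP : g i ∈ Pos := hI.1 (hg i)
  have hgiΦ : g i ∈ Φ := ((mem_pos_iff hPosEq).1 hgiP).1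
  have hαΦ : α ∈ Φ := ((mem_pos_iff hPosEq).1 hα).1
  have hrm : IsSumOf I c (α + β - g i) := by
    have := isSumOf_erase g hg i
    rwa [hsum] at this
  have hfrm : 0 < f (α + β - g i) := by
    obtain ⟨g', hg', hsum'⟩ := hrm
    rw [← hsum']
    exact f_sum_pos f hPosEq hc g' (fun j => hI.1 (hg' j))
  by_cases heq : g i = α
  · -- the summand is α itself
    have hb : IsSumOf I c β := by
      have : α + β - g i = β := by rw [heq]; abel
      rwa [this] at hrm
    have h1 : c ≤ aPlus I β := le_aPlus bdd hb
    have h2 : 1 ≤ aPlus I α := le_aPlus bdd (isSumOf_single (heq ▸ hg i))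
    omega
  · have hsubΦ : α - g i ∈ Φ :=
      sub_mem hΦ hαΦ hgiΦ (by rwa [real_inner_comm]) (Ne.symm heq)
    rcases lt_or_gt_of_ne (hf _ hsubΦ) with hneg | hpos
    · -- g i is above α : β is a sum of c elements of I
      have hgα : g i - α ∈ Pos := by
        refine mem_pos_of hPosEq ?_ ?_
        · have := neg_mem hΦ hsubΦ
          rwa [neg_sub] at this
        · rw [map_sub] at hneg ⊢
          linarith
      have hβsum : IsSumOf I c β := by
        have := low hΦ f hPosEq hI c hc (g i - α) (α + β - g i) hgα
          (by
            have he : g i - α + (α + β - g i) = β := by abel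
            rw [he]; exact hβ) hrm
        have he : g i - α + (α + β - g i) = β := by abel
        rwa [he] at this
      have h1 : c ≤ aPlus I β := le_aPlus bdd hβsum
      omega
    · -- g i is below α : recurse with (α - g i, β)
      have hη : α - g i ∈ Pos := mem_pos_of hPosEq hsubΦ hpos
      have hsgi : α + β - g i ∈ Pos := by
        have hflt : f (g i) < f (α + β) := by
          rw [map_sub] at hfrm; linarith
        exact pos_sub hΦ f hPosEq hs hgiP (by rwa [real_inner_comm]) hflt
      have he : (α - g i) + β = α + β - g i := by abel
      have hrec := IH (α - g i) β hη hβ (by rwa [he]) (by rwa [he])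
      have hstep : aPlus I (α - g i) + 1 ≤ aPlus I α := by
        have := aPlus_succ hI bdd (hg i) hη (by
          have he2 : (α - g i) + g i = α := by abel
          rwa [he2])
        have he2 : (α - g i) + g i = α := by abel
        rwa [he2] at this
      omega

/-- Upper bound: any decomposition of `α + β` has at most `a + b + 1` parts. -/
lemma up (hΦ : IsRootSystem Φ) (f : V →ₗ[ℝ] ℝ) (hf : ∀ α ∈ Φ, f α ≠ 0)
    (hPosEq : Pos = {α ∈ Φ | 0 < f α}) (hI : IsUpperIdeal Pos I)
    (bdd : ∀ γ : V, BddAbove {k | IsSumOf I k γ}) : ∀ c : ℕ, ∀ α β : V, α ∈ Pos → β ∈ Pos → α + β ∈ Pos →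
    IsSumOf I c (α + β) → c ≤ aPlus I α + aPlus I β + 1 := by
  intro c
  induction c with
  | zero => intro α β _ _ _ _; omega
  | succ c IH =>
    intro α β hα hβ hs hdec
    rcases Nat.eq_zero_or_pos c with rfl | hc
    · omega
    · obtain ⟨g, hg, hsum⟩ := hdec
      have hs0 : (α + β) ≠ 0 := pos_ne_zero hΦ hPosEq hs
      have : 0 < ∑ j, ⟪g j, α + β⟫ := by
        rw [← sum_inner, hsum]
        exact inner_self_pos' hs0
      obtain ⟨i, hi⟩ := exists_pos_term this
      have hsplit : 0 < ⟪g i, α⟫ ∨ 0 < ⟪g i, β⟫ := by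
        by_contra hcon
        push_neg at hcon
        rw [inner_add_right] at hi
        linarith [hcon.1, hcon.2]
      rcases hsplit with hia | hib
      · exact up_case hΦ f hf hPosEq hI bdd hc hα hβ hs g hg hsum i hi hia IH
      · have hsum' : ∑ j, g j = β + α := by rwa [add_comm α β] at hsum
        have hs' : β + α ∈ Pos := by rwa [add_comm]
        have hi' : 0 < ⟪g i, β + α⟫ := by rwa [add_comm α β] at hi
        have IH' : ∀ α' β' : V, α' ∈ Pos → β' ∈ Pos → α' + β' ∈ Pos →
            IsSumOf I c (α' + β') → c ≤ aPlus I α' + aPlus I β' + 1 := IH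
        have := up_case hΦ f hf hPosEq hI bdd hc hβ hα hs' g hg hsum' i hi' hib IH'
        omega

end WithBdd

end Main

end AplusAux
/-- For an upper order ideal `I` of `Φ⁺` and `α, β, α + β ∈ Φ⁺`, the quantities
`a = α_{I,+}`, `b = β_{I,+}`, `c = (α+β)_{I,+}` satisfy `a + b ≤ c ≤ a + b + 1`. -/
theorem aPlus_add_le (Φ Pos I : Set V) (hΦ : IsRootSystem Φ)
    (hirr : IsIrreducibleRootSystem Φ) (hPos : IsPositiveSystem Φ Pos)
    (hI : IsUpperIdeal Pos I) (α β : V) (hα : α ∈ Pos) (hβ : β ∈ Pos)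
    (hαβ : α + β ∈ Pos) :
    aPlus I α + aPlus I β ≤ aPlus I (α + β) ∧
      aPlus I (α + β) ≤ aPlus I α + aPlus I β + 1 := by
  classical
  obtain ⟨f, hf, hPosEq⟩ := hPos
  have hPosSub : Pos ⊆ Φ := by
    intro x hx
    rw [hPosEq] at hx
    exact hx.1
  have hPosFin : Pos.Finite := hΦ.finite.subset hPosSub
  -- a uniform positive lower bound for `f` on `Pos`
  obtain ⟨m, hm0, hm⟩ : ∃ m : ℝ, 0 < m ∧ ∀ ρ ∈ Pos, m ≤ f ρ := by
    rcases Set.eq_empty_or_nonempty Pos with hP | hP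
    · exact ⟨1, one_pos, fun ρ hρ => by rw [hP] at hρ; exact absurd hρ (Set.notMem_empty ρ)⟩
    · have hfin : (f '' Pos).Finite := hPosFin.image f
      have hne : hfin.toFinset.Nonempty := by
        rw [Set.Finite.toFinset_nonempty]
        exact hP.image f
      refine ⟨hfin.toFinset.min' hne, ?_, ?_⟩
      · have := hfin.toFinset.min'_mem hne
        rw [Set.Finite.mem_toFinset] at this
        obtain ⟨ρ, hρ, he⟩ := this
        rw [← he]
        rw [hPosEq] at hρ
        exact hρ.2
      · intro ρ hρ
        exact hfin.toFinset.min'_le (f ρ) (by rw [Set.Finite.mem_toFinset]; exact ⟨ρ, hρ, rfl⟩)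
  -- boundedness of the decomposition-length sets
  have bdd : ∀ γ : V, BddAbove {k | IsSumOf I k γ} := by
    intro γ
    refine ⟨⌈f γ / m⌉₊, fun k hk => ?_⟩
    obtain ⟨g, hg, hs⟩ := hk
    have h1 : (k : ℝ) * m ≤ f γ := by
      calc (k : ℝ) * m = ∑ _j : Fin k, m := by
            rw [Finset.sum_const, Finset.card_univ, Fintype.card_fin, nsmul_eq_mul]
          _ ≤ ∑ j, f (g j) := Finset.sum_le_sum (fun j _ => hm _ (hI.1 (hg j)))
          _ = f γ := by rw [← map_sum, hs]
    have h2 : (k : ℝ) ≤ f γ / m := (le_div_iff₀ hm0).2 h1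
    exact_mod_cast h2.trans (Nat.le_ceil _)
  constructor
  · -- lower bound
    rcases Set.eq_empty_or_nonempty {k | IsSumOf I k α} with hea | hna
    · have ha0 : aPlus I α = 0 := by unfold aPlus; rw [hea]; simp only [csSup_empty, Nat.bot_eq_zero]
      rcases Set.eq_empty_or_nonempty {k | IsSumOf I k β} with heb | hnb
      · have hb0 : aPlus I β = 0 := by unfold aPlus; rw [heb]; simp only [csSup_empty, Nat.bot_eq_zero]
        rw [ha0, hb0]
        omega
      · have hbspec := AplusAux.aPlus_spec (I := I) bdd hnb
        have hb1 : 1 ≤ aPlus I β := by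
          rcases Nat.eq_zero_or_pos (aPlus I β) with h0 | h1
          · exfalso
            rw [h0] at hbspec
            exact AplusAux.pos_ne_zero hΦ hPosEq hβ (AplusAux.isSumOf_zero hbspec)
          · exact h1
        have := AplusAux.low hΦ f hPosEq hI (aPlus I β) hb1 α β hα hαβ hbspec
        have hle := AplusAux.le_aPlus (I := I) bdd this
        omega
    · rcases Set.eq_empty_or_nonempty {k | IsSumOf I k β} with heb | hnb
      · have hb0 : aPlus I β = 0 := by unfold aPlus; rw [heb]; simp only [csSup_empty, Nat.bot_eq_zero]
        have haspec := AplusAux.aPlus_spec (I := I) bdd hna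
        have ha1 : 1 ≤ aPlus I α := by
          rcases Nat.eq_zero_or_pos (aPlus I α) with h0 | h1
          · exfalso
            rw [h0] at haspec
            exact AplusAux.pos_ne_zero hΦ hPosEq hα (AplusAux.isSumOf_zero haspec)
          · exact h1
        have hβα : β + α ∈ Pos := by rwa [add_comm]
        have := AplusAux.low hΦ f hPosEq hI (aPlus I α) ha1 β α hβ hβα haspec
        rw [add_comm β α] at this
        have hle := AplusAux.le_aPlus (I := I) bdd this
        omega
      · have haspec := AplusAux.aPlus_spec (I := I) bdd hna
        have hbspec := AplusAux.aPlus_spec (I := I) bdd hnb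
        exact AplusAux.le_aPlus (I := I) bdd (AplusAux.isSumOf_concat haspec hbspec)
  · -- upper bound
    rcases Set.eq_empty_or_nonempty {k | IsSumOf I k (α + β)} with hec | hnc
    · have hc0 : aPlus I (α + β) = 0 := by unfold aPlus; rw [hec]; simp only [csSup_empty, Nat.bot_eq_zero]
      omega
    · have hcspec := AplusAux.aPlus_spec (I := I) bdd hnc
      exact AplusAux.up hΦ f hf hPosEq hI bdd (aPlus I (α + β)) α β hα hβ hαβ hcspec
end

section
/- Let ℐ be an ideal of Φ⁺ and let w ∈ W_a satisfy supp(w) = ℐ (i.e., the support of w, the set of α ∈ Φ with α + mδ ∈ N(w) for some m, equals ℐ). Then k(α, w) ≥ α_{ℐ,+} for all α ∈ Φ⁺, where α_{ℐ,+} is the maximal number of summands in a decomposition of α as a sum of elements of ℐ. -/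
open RealInnerProductSpace
open scoped Classical

variable {V : Type*} [NormedAddCommGroup V] [InnerProductSpace ℝ V] [FiniteDimensional ℝ V]

/-- The reflection in the hyperplane orthogonal to `α`. -/
noncomputable def rootReflection (α : V) : V ≃ₗᵢ[ℝ] V :=
  Submodule.reflection ((ℝ ∙ α)ᗮ)

/-- The Weyl group: the subgroup of linear isometries generated by root reflections. -/
noncomputable def WeylGroup (Φ : Set V) : Subgroup (V ≃ₗᵢ[ℝ] V) :=
  Subgroup.closure {g | ∃ α ∈ Φ, g = rootReflection α}

/-- The coroot `α∨ = 2α/⟨α,α⟩` of a root `α`. -/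
noncomputable def coroot (α : V) : V := (2 / ⟪α, α⟫) • α

/-- The coroot lattice `Q∨`. -/
noncomputable def corootLattice (Φ : Set V) : AddSubgroup V :=
  AddSubgroup.closure {v | ∃ α ∈ Φ, v = coroot α}

/-- A root reflection viewed as an affine transformation. -/
noncomputable def rootReflectionAff (α : V) : V ≃ᵃ[ℝ] V :=
  (rootReflection α).toLinearEquiv.toAffineEquiv

/-- The affine Weyl group `W_a ≅ W ⋉ Q∨`: generated by the root reflections together
with the translations by elements of the coroot lattice. -/
noncomputable def affineWeylGroup (Φ : Set V) : Subgroup (V ≃ᵃ[ℝ] V) :=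
  Subgroup.closure
    ({g | ∃ α ∈ Φ, g = rootReflectionAff α} ∪
     {g | ∃ lam ∈ corootLattice Φ, g = AffineEquiv.constVAdd ℝ V lam})

/-- The fundamental alcove `A` (with respect to the highest root `θ`). -/
def fundamentalAlcove (Pos : Set V) (θ : V) : Set V :=
  {v | (∀ α, IsSimpleRoot Pos α → 0 < ⟪α, v⟫) ∧ ⟪θ, v⟫ < 1}

/-- `kk α = k(α, w)` for every positive root `α`: the alcove `w(A)` lies strictly
between the hyperplanes `H_{α, kk α}` and `H_{α, kk α + 1}`. -/
def IsAlcoveK (Pos : Set V) (θ : V) (w : V ≃ᵃ[ℝ] V) (kk : V → ℤ) : Prop :=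
  ∀ α ∈ Pos, ∀ v ∈ fundamentalAlcove Pos θ,
    (kk α : ℝ) < ⟪α, w v⟫ ∧ ⟪α, w v⟫ < kk α + 1

/-- `supp w = I` for an ideal `I ⊆ Φ⁺`: `w` is dominant (no negative root occurs in
the support, i.e. `k(α, w) ≥ 0` for all positive `α`) and a positive root `α` lies in
the support (i.e. `k(α, w) ≥ 1`) exactly when `α ∈ I`. -/
def SuppIs (Pos : Set V) (θ : V) (w : V ≃ᵃ[ℝ] V) (I : Set V) : Prop :=
  ∃ kk : V → ℤ, IsAlcoveK Pos θ w kk ∧ ∀ α ∈ Pos, 0 ≤ kk α ∧ (α ∈ I ↔ 1 ≤ kk α)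

/-- The sign type `ST(I)`: the set of elements of the affine Weyl group whose support
is `I`. -/
noncomputable def signType (Φ Pos : Set V) (θ : V) (I : Set V) : Set (V ≃ᵃ[ℝ] V) :=
  {w | w ∈ affineWeylGroup Φ ∧ SuppIs Pos θ w I}

/-- The length of `w ∈ W_a`, computed as `∑_{α ∈ Φ⁺} |k(α, w)|`. -/
noncomputable def affLen (Pos : Set V) (θ : V) (w : V ≃ᵃ[ℝ] V) : ℕ :=
  if h : ∃ kk : V → ℤ, IsAlcoveK Pos θ w kk then
    ∑ᶠ α ∈ Pos, (h.choose α).natAbs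
  else 0

/-- The simple affine reflections `S = {s₀, s₁, …, s_n}` of `W_a`: the reflections in
the simple roots together with the affine reflection `s₀ = s_θ τ_{-θ∨}` in `H_{θ,1}`. -/
noncomputable def simpleAffineReflections (Pos : Set V) (θ : V) : Set (V ≃ᵃ[ℝ] V) :=
  {s | (∃ α, IsSimpleRoot Pos α ∧ s = rootReflectionAff α) ∨
    s = (rootReflectionAff θ).trans (AffineEquiv.constVAdd ℝ V (coroot θ))}

/-- The translation part `λ` of `w = x τ_λ` (so that `w v = x (v + λ)`). -/
noncomputable def translationPart (w : V ≃ᵃ[ℝ] V) : V := w.linear.symm (w 0)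

/-! Evaluate at a point `v` of the fundamental alcove: roots of `I` have `k(β, w) ≥ 1`, so each
summand of a decomposition `α = β₁ + ⋯ + β_k` over `I` contributes more than `1` to `⟪α, w v⟫`,
which is less than `k(α, w) + 1`. -/

theorem IsPositiveSystem.exists_inner_pos {Φ Pos : Set V} (hPos : IsPositiveSystem Φ Pos) :
    ∃ u : V, ∀ α ∈ Pos, 0 < ⟪α, u⟫ := by
  obtain ⟨f, -, rfl⟩ := hPos
  refine ⟨(InnerProductSpace.toDual ℝ V).symm (LinearMap.toContinuousLinearMap f), ?_⟩
  rintro α ⟨-, hα⟩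
  rwa [real_inner_comm, InnerProductSpace.toDual_symm_apply]

theorem fundamentalAlcove_nonempty {Φ Pos : Set V} (hPos : IsPositiveSystem Φ Pos) (θ : V) :
    (fundamentalAlcove Pos θ).Nonempty := by
  obtain ⟨u, hu⟩ := hPos.exists_inner_pos
  set ε : ℝ := (|⟪θ, u⟫| + 1)⁻¹
  have hε : 0 < ε := by positivity
  refine ⟨(ε / 2) • u, fun α hα => ?_, ?_⟩
  · rw [real_inner_smul_right]
    exact mul_pos (half_pos hε) (hu α hα.1)
  · have hεθ : ε * ⟪θ, u⟫ < 1 := by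
      calc ε * ⟪θ, u⟫ ≤ ε * |⟪θ, u⟫| := mul_le_mul_of_nonneg_left (le_abs_self _) hε.le
        _ < ε * (|⟪θ, u⟫| + 1) := by gcongr; linarith
        _ = 1 := inv_mul_cancel₀ (by positivity)
    rw [real_inner_smul_right]
    nlinarith [hε]

theorem IsSumOf.natCast_le_inner {E : Type*} [NormedAddCommGroup E] [InnerProductSpace ℝ E]
    {S : Set E} {k : ℕ} {γ : E} (h : IsSumOf S k γ) {p : E}
    (hS : ∀ β ∈ S, 1 ≤ ⟪β, p⟫) : (k : ℝ) ≤ ⟪γ, p⟫ := by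
  obtain ⟨g, hg, rfl⟩ := h
  rw [sum_inner]
  simpa using Finset.sum_le_sum fun i (_ : i ∈ Finset.univ) => hS _ (hg i)

theorem k_ge_aPlus_general (Φ Pos I : Set V) (hPos : IsPositiveSystem Φ Pos)
    (θ : V)
    (hI : IsUpperIdeal Pos I)
    (w : V ≃ᵃ[ℝ] V)
    (kk : V → ℤ) (hkk : IsAlcoveK Pos θ w kk)
    (hsupp : ∀ α ∈ Pos, 0 ≤ kk α ∧ (α ∈ I ↔ 1 ≤ kk α)) :
    ∀ α ∈ Pos, (aPlus I α : ℤ) ≤ kk α := by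
  intro α hα
  obtain ⟨v, hv⟩ := fundamentalAlcove_nonempty hPos θ
  have hI_one_le : ∀ β ∈ I, 1 ≤ ⟪β, w v⟫ := fun β hβ => by
    have hβ1 : (1 : ℝ) ≤ kk β := mod_cast ((hsupp β (hI.1 hβ)).2).1 hβ
    linarith [(hkk β (hI.1 hβ) v hv).1]
  have hbound : aPlus I α ≤ (kk α).toNat := csSup_le' fun k hk => by
    have hk : (k : ℝ) < kk α + 1 :=
      (IsSumOf.natCast_le_inner hk hI_one_le).trans_lt (hkk α hα v hv).2
    have : (k : ℤ) < kk α + 1 := mod_cast hk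
    omega
  have := (hsupp α hα).1
  omega

/-- If `I` is an ideal of `Φ⁺` and `w ∈ W_a` has `supp w = I`, then
`k(α, w) ≥ α_{I,+}` for all `α ∈ Φ⁺`. -/
theorem k_ge_aPlus (Φ Pos I : Set V) (hΦ : IsRootSystem Φ)
    (hirr : IsIrreducibleRootSystem Φ) (hPos : IsPositiveSystem Φ Pos)
    (θ : V) (hθ : θ ∈ Pos ∧ ∀ α ∈ Φ, RootLE Pos α θ)
    (hI : IsUpperIdeal Pos I)
    (w : V ≃ᵃ[ℝ] V) (hw : w ∈ affineWeylGroup Φ)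
    (kk : V → ℤ) (hkk : IsAlcoveK Pos θ w kk)
    (hsupp : ∀ α ∈ Pos, 0 ≤ kk α ∧ (α ∈ I ↔ 1 ≤ kk α)) :
    ∀ α ∈ Pos, (aPlus I α : ℤ) ≤ kk α :=
  k_ge_aPlus_general Φ Pos I hPos θ hI w kk hkk hsupp
end

section
/- Let ℐ be a strictly positive ideal of Φ⁺ and w ∈ W_a with supp(w) = ℐ. Then k(α, w) ≤ α_{ℐ,−} for all α ∈ Φ⁺, where α_{ℐ,−} := min{ k : α is a sum of k+1 elements of Φ⁺ \ ℐ }. -/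
open RealInnerProductSpace
open scoped Classical

variable {V : Type*} [NormedAddCommGroup V] [InnerProductSpace ℝ V] [FiniteDimensional ℝ V]

/-!
Pick a point `v` of the fundamental alcove. For `w` with support `I`, every root `β ∈ Φ⁺ \ I`
has `k(β, w) = 0`, so `⟪β, w v⟫ < 1`. Writing `α` as a sum of `α_{I,-} + 1` roots of
`Φ⁺ \ I` and using linearity of `⟪·, w v⟫` gives `k(α, w) < ⟪α, w v⟫ < α_{I,-} + 1`.
Such a decomposition exists because `Φ⁺` is finite and every positive root splits into
simple roots, which lie outside `I`.
-/

section

variable {E : Type*} [NormedAddCommGroup E]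

namespace IsSumOf

variable {S T : Set E} {m n : ℕ} {x y : E}

lemma add (hx : IsSumOf S m x) (hy : IsSumOf S n y) : IsSumOf S (m + n) (x + y) := by
  obtain ⟨g, hg, rfl⟩ := hx
  obtain ⟨h, hh, rfl⟩ := hy
  refine ⟨Fin.append g h, fun i => ?_, ?_⟩
  · cases i using Fin.addCases <;> simp only [Fin.append_left, Fin.append_right, hg, hh]
  · rw [Fin.sum_univ_add]
    simp only [Fin.append_left, Fin.append_right]

lemma mono (hST : S ⊆ T) (hx : IsSumOf S n x) : IsSumOf T n x :=
  let ⟨g, hg, hgx⟩ := hx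
  ⟨g, fun i => hST (hg i), hgx⟩

lemma inner_lt [InnerProductSpace ℝ E] {z : E} {c : ℝ} (hS : ∀ β ∈ S, ⟪β, z⟫ < c)
    (hx : IsSumOf S (n + 1) x) : ⟪x, z⟫ < (n + 1) * c := by
  obtain ⟨g, hg, rfl⟩ := hx
  calc ⟪∑ i, g i, z⟫ = ∑ i, ⟪g i, z⟫ := sum_inner _ _ _
    _ < ∑ _i : Fin (n + 1), c := Finset.sum_lt_sum_of_nonempty Finset.univ_nonempty
        fun i _ => hS _ (hg i)
    _ = (n + 1) * c := by simp

end IsSumOf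

lemma exists_isSumOf_simpleRoots [Module ℝ E] {Pos : Set E} (hfin : Pos.Finite)
    (f : E →ₗ[ℝ] ℝ) (hf : ∀ α ∈ Pos, 0 < f α) {α : E} (hα : α ∈ Pos) :
    ∃ k, IsSumOf {β | IsSimpleRoot Pos β} (k + 1) α := by
  have hwf : Pos.WellFoundedOn (fun β γ => f β < f γ) :=
    Set.wellFoundedOn_image.mp (hfin.image f).wellFoundedOn
  refine hwf.induction (P := fun α => ∃ k, IsSumOf {β | IsSimpleRoot Pos β} (k + 1) α) hα
    fun α hα ih => ?_
  by_cases hs : IsSimpleRoot Pos α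
  · exact ⟨0, fun _ => α, fun _ => hs, by simp⟩
  obtain ⟨β, hβ, γ, hγ, rfl⟩ : ∃ β ∈ Pos, ∃ γ ∈ Pos, α = β + γ := by
    simpa [IsSimpleRoot, hα] using hs
  obtain ⟨m, hm⟩ := ih β hβ (by simp only [map_add]; linarith [hf γ hγ])
  obtain ⟨n, hn⟩ := ih γ hγ (by simp only [map_add]; linarith [hf β hβ])
  exact ⟨m + n + 1, (by omega : m + 1 + (n + 1) = m + n + 1 + 1) ▸ hm.add hn⟩

lemma isSumOf_aMinus {Pos I : Set E} {α : E} (h : ∃ k, IsSumOf (Pos \ I) (k + 1) α) :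
    IsSumOf (Pos \ I) (aMinus Pos I α + 1) α :=
  Nat.sInf_mem h

variable [InnerProductSpace ℝ E]

lemma fundamentalAlcove_nonempty_s12 [FiniteDimensional ℝ E] {Pos : Set E} (θ : E)
    (f : E →ₗ[ℝ] ℝ) (hf : ∀ α ∈ Pos, 0 < f α) : (fundamentalAlcove Pos θ).Nonempty := by
  set u := (InnerProductSpace.toDual ℝ E).symm (LinearMap.toContinuousLinearMap f)
  have hu : ∀ x, ⟪x, u⟫ = f x := fun x => by
    rw [real_inner_comm, InnerProductSpace.toDual_symm_apply]
    rfl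
  refine ⟨(|f θ| + 1)⁻¹ • u, fun α hα => ?_, ?_⟩
  · rw [real_inner_smul_right, hu]
    exact mul_pos (by positivity) (hf α hα.1)
  · rw [real_inner_smul_right, hu, inv_mul_lt_iff₀ (by positivity)]
    linarith [le_abs_self (f θ)]

lemma IsAlcoveK.le_of_isSumOf {Pos S : Set E} {θ α : E} {w : E ≃ᵃ[ℝ] E} {kk : E → ℤ}
    {n : ℕ} (hkk : IsAlcoveK Pos θ w kk) (hA : (fundamentalAlcove Pos θ).Nonempty)
    (hS : S ⊆ Pos) (hS0 : ∀ β ∈ S, kk β ≤ 0) (hα : α ∈ Pos) (hsum : IsSumOf S (n + 1) α) :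
    kk α ≤ n := by
  obtain ⟨v, hv⟩ := hA
  have hS1 : ∀ β ∈ S, ⟪β, w v⟫ < 1 := fun β hβ => by
    have : (kk β : ℝ) ≤ 0 := by exact_mod_cast hS0 β hβ
    linarith [(hkk β (hS hβ) v hv).2]
  have : (kk α : ℝ) < n + 1 := by
    linarith [(hkk α hα v hv).1, hsum.inner_lt hS1]
  exact Int.lt_add_one_iff.mp (by exact_mod_cast this)

end

theorem k_le_aMinus_general (Φ Pos I : Set V) (hΦ : IsRootSystem Φ) (hPos : IsPositiveSystem Φ Pos)
    (θ : V) (hsp : ∀ α, IsSimpleRoot Pos α → α ∉ I) (w : V ≃ᵃ[ℝ] V)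
    (kk : V → ℤ) (hkk : IsAlcoveK Pos θ w kk)
    (hsupp : ∀ α ∈ Pos, 0 ≤ kk α ∧ (α ∈ I ↔ 1 ≤ kk α)) :
    ∀ α ∈ Pos, kk α ≤ (aMinus Pos I α : ℤ) := by
  obtain ⟨f, -, hPos⟩ := hPos
  have hf : ∀ α ∈ Pos, 0 < f α := fun α hα => (hPos ▸ hα).2
  have hfin : Pos.Finite := hΦ.finite.subset (hPos ▸ Set.sep_subset _ _)
  have hsimple : {β | IsSimpleRoot Pos β} ⊆ Pos \ I := fun β hβ => ⟨hβ.1, hsp β hβ⟩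
  have hk0 : ∀ β ∈ Pos \ I, kk β ≤ 0 := fun β hβ =>
    not_lt.mp fun hpos => hβ.2 ((hsupp β hβ.1).2.mpr hpos)
  intro α hα
  obtain ⟨k, hk⟩ := exists_isSumOf_simpleRoots hfin f hf hα
  exact hkk.le_of_isSumOf (fundamentalAlcove_nonempty_s12 θ f hf) Set.sdiff_subset hk0 hα
    (isSumOf_aMinus ⟨k, hk.mono hsimple⟩)

/-- If `I` is a strictly positive ideal of `Φ⁺` and `w ∈ W_a` has `supp w = I`, then
`k(α, w) ≤ α_{I,-}` for all `α ∈ Φ⁺`. -/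
theorem k_le_aMinus (Φ Pos I : Set V) (hΦ : IsRootSystem Φ)
    (hirr : IsIrreducibleRootSystem Φ) (hPos : IsPositiveSystem Φ Pos)
    (θ : V) (hθ : θ ∈ Pos ∧ ∀ α ∈ Φ, RootLE Pos α θ)
    (hI : IsUpperIdeal Pos I) (hsp : ∀ α, IsSimpleRoot Pos α → α ∉ I)
    (w : V ≃ᵃ[ℝ] V) (hw : w ∈ affineWeylGroup Φ)
    (kk : V → ℤ) (hkk : IsAlcoveK Pos θ w kk)
    (hsupp : ∀ α ∈ Pos, 0 ≤ kk α ∧ (α ∈ I ↔ 1 ≤ kk α)) :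
    ∀ α ∈ Pos, kk α ≤ (aMinus Pos I α : ℤ) :=
  k_le_aMinus_general Φ Pos I hΦ hPos θ hsp w kk hkk hsupp
end
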